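/- arXiv:1508.00346 — 2 statements merged into one kernel-verified Lean document; each statement's English description precedes it below -/
import Mathlib

section
/- Under the setting of the previous orthogonality: let u solve -div(a∇u) = f in H¹₀(Ω) with ‖u²‖_a ≤ CH‖f‖_{L²(Ω)} for the bubble part. Let {ψ_i} and {φ_j} be two finite families in H¹₀(Ω), with each φ_j a-harmonic on every coarse cell D_i, and suppose span{φ_j|_Γ} = span{ψ_i|_Γ} where Γ = ⋃_i ∂D_i. Let u_h and u_h^{MS} be the respective Galerkin solutions. Then ‖u − u_h^{MS}‖_a² ≤ ‖u − u_h‖_a² + C²H²‖f‖²_{L²(Ω)}. -/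
/-!
Let `v` be the function in the multi-scale space whose trace on `Γ` is that of `u_h`; it exists
because the two trace spans coincide. By Galerkin optimality `u_h^{MS}` is at least as close to
`u` as `v`. Writing `u - v = (u¹ - v) + u²`, the two summands are `a`-orthogonal since `u¹ - v`
is cellwise `a`-harmonic, and `u¹ - v` has the same trace as `u - u_h` because the bubble `u²`
has zero trace, so by energy minimality its energy is at most `‖u - u_h‖_a²`.
-/

open RealInnerProductSpace Submodule Set

theorem exists_mem_span_apply_eq_of_span_range_comp_eq {R M N ι κ : Type*} [Semiring R]
    [AddCommMonoid M] [Module R M] [AddCommMonoid N] [Module R N] (f : M →ₗ[R] N)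
    {φ : ι → M} {ψ : κ → M} (hspan : span R (range (f ∘ φ)) = span R (range (f ∘ ψ)))
    {x : M} (hx : x ∈ span R (range ψ)) : ∃ y ∈ span R (range φ), f y = f x := by
  have hmap : (span R (range φ)).map f = (span R (range ψ)).map f := by
    rw [map_span, map_span, ← range_comp, ← range_comp, hspan]
  exact mem_map.1 (hmap ▸ mem_map_of_mem hx)

section Energy

variable {V : Type*} [NormedAddCommGroup V] [InnerProductSpace ℝ V]

theorem norm_sub_le_of_forall_inner_eq {K : Submodule ℝ V} {u x y : V} (hx : x ∈ K)
    (hy : y ∈ K) (hgal : ∀ v ∈ K, ⟪x, v⟫ = ⟪u, v⟫) : ‖u - x‖ ≤ ‖u - y‖ := by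
  have horth : ⟪u - x, x - y⟫ = 0 := by
    rw [inner_sub_left, hgal _ (K.sub_mem hx hy), sub_self]
  have hpyth := norm_add_sq_eq_norm_sq_add_norm_sq_real horth
  rw [sub_add_sub_cancel] at hpyth
  exact (mul_self_le_mul_self_iff (norm_nonneg _) (norm_nonneg _)).2
    (by nlinarith [mul_self_nonneg ‖x - y‖])

theorem norm_sub_sq_le_add_norm_bubble_sq {Z : Type*} [AddCommGroup Z] [Module ℝ Z]
    (γ : V →ₗ[ℝ] Z) {M : Submodule ℝ V} (hmin : ∀ w m : V, m ∈ M → γ m = γ w → ‖m‖ ≤ ‖w‖)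
    {u u1 u2 v w : V} (hdecomp : u = u1 + u2) (hu1 : u1 ∈ M) (horth : ∀ m ∈ M, ⟪u2, m⟫ = 0)
    (htrace : γ u2 = 0) (hv : v ∈ M) (hvw : γ v = γ w) :
    ‖u - v‖ ^ 2 ≤ ‖u - w‖ ^ 2 + ‖u2‖ ^ 2 := by
  have hu1v : u1 - v ∈ M := M.sub_mem hu1 hv
  have hpyth : ‖u - v‖ ^ 2 = ‖u1 - v‖ ^ 2 + ‖u2‖ ^ 2 := by
    have h := norm_add_sq_eq_norm_sq_add_norm_sq_real
      ((real_inner_comm u2 (u1 - v)).trans (horth _ hu1v))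
    rw [show u1 - v + u2 = u - v by rw [hdecomp]; abel] at h
    simpa only [sq] using h
  have hharm : ‖u1 - v‖ ≤ ‖u - w‖ :=
    hmin _ _ hu1v (by rw [map_sub, map_sub, hvw, hdecomp, map_add, htrace, add_zero])
  rw [hpyth]
  gcongr

end Energy

theorem stmt_8_general {V Z : Type*}
    [NormedAddCommGroup V] [InnerProductSpace ℝ V]
    [AddCommGroup Z] [Module ℝ Z]
    (γ : V →ₗ[ℝ] Z) (M : Submodule ℝ V)
    -- elements of `M` (cellwise a-harmonic functions) minimize energy among all
    -- functions with the same trace on `Γ`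
    (hmin : ∀ (w : V) (m : V), m ∈ M → γ m = γ w → ‖m‖ ≤ ‖w‖)
    (C H Nf : ℝ)
    (u u1 u2 : V)
    (hdecomp : u = u1 + u2) (hu1 : u1 ∈ M)
    -- the bubble part is `a`-orthogonal to cellwise `a`-harmonic functions
    (horth : ∀ w ∈ M, ⟪u2, w⟫ = 0)
    -- the bubble part has zero trace and is small: `‖u²‖_a ≤ C H ‖f‖_{L²}`
    (htrace : γ u2 = 0) (hbub : ‖u2‖ ≤ C * H * Nf)
    {m n : ℕ} (ψ : Fin m → V) (φ : Fin n → V) (hφM : ∀ j, φ j ∈ M)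
    -- equal trace spans on the skeleton `Γ`
    (hspan : Submodule.span ℝ (Set.range (γ ∘ φ)) = Submodule.span ℝ (Set.range (γ ∘ ψ)))
    (uh uhMS : V)
    (huh : uh ∈ Submodule.span ℝ (Set.range ψ))
    (huhMS : uhMS ∈ Submodule.span ℝ (Set.range φ))
    -- Galerkin conditions w.r.t. the energy inner product
    (hGalMS : ∀ v ∈ Submodule.span ℝ (Set.range φ), ⟪uhMS, v⟫ = ⟪u, v⟫) :
    ‖u - uhMS‖ ^ 2 ≤ ‖u - uh‖ ^ 2 + C ^ 2 * H ^ 2 * Nf ^ 2 := by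
  obtain ⟨v, hvφ, hv⟩ := exists_mem_span_apply_eq_of_span_range_comp_eq γ hspan huh
  have hspanM : span ℝ (range φ) ≤ M := span_le.2 (range_subset_iff.2 hφM)
  calc ‖u - uhMS‖ ^ 2 ≤ ‖u - v‖ ^ 2 := by
        gcongr; exact norm_sub_le_of_forall_inner_eq huhMS hvφ hGalMS
    _ ≤ ‖u - uh‖ ^ 2 + ‖u2‖ ^ 2 :=
        norm_sub_sq_le_add_norm_bubble_sq γ hmin hdecomp hu1 horth htrace (hspanM hvφ) hv
    _ ≤ ‖u - uh‖ ^ 2 + (C * H * Nf) ^ 2 := by gcongr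
    _ = ‖u - uh‖ ^ 2 + C ^ 2 * H ^ 2 * Nf ^ 2 := by ring

/-- Proposition 3.1 (abstract form): the Hilbert space `V` is `H¹₀(Ω)` with the energy
inner product `a(·,·)`; `γ : V →ₗ Z` is the trace map onto the coarse skeleton `Γ`;
`M` is the subspace of functions that are `a`-harmonic on each coarse cell (a-harmonic
functions minimize the energy among functions with the same trace, and the bubble part
has zero trace).  If the traces of the multi-scale family `{φ j} ⊆ M` span the same
space as those of `{ψ i}`, and `u = u¹ + u²` with `u¹ ∈ M` and bubble `u²` satisfying
`‖u²‖_a ≤ C H ‖f‖_{L²}`, then the Galerkin solutions satisfy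
`‖u − u_h^{MS}‖_a² ≤ ‖u − u_h‖_a² + C² H² ‖f‖²_{L²}`. -/
theorem stmt_8 {V Z : Type*}
    [NormedAddCommGroup V] [InnerProductSpace ℝ V] [CompleteSpace V]
    [AddCommGroup Z] [Module ℝ Z]
    (γ : V →ₗ[ℝ] Z) (M : Submodule ℝ V)
    -- elements of `M` (cellwise a-harmonic functions) minimize energy among all
    -- functions with the same trace on `Γ`
    (hmin : ∀ (w : V) (m : V), m ∈ M → γ m = γ w → ‖m‖ ≤ ‖w‖)
    (C H Nf : ℝ) (hC : 0 < C) (hH : 0 < H) (hNf : 0 ≤ Nf)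
    (u u1 u2 : V)
    (hdecomp : u = u1 + u2) (hu1 : u1 ∈ M)
    -- the bubble part is `a`-orthogonal to cellwise `a`-harmonic functions
    (horth : ∀ w ∈ M, ⟪u2, w⟫ = 0)
    -- the bubble part has zero trace and is small: `‖u²‖_a ≤ C H ‖f‖_{L²}`
    (htrace : γ u2 = 0) (hbub : ‖u2‖ ≤ C * H * Nf)
    {m n : ℕ} (ψ : Fin m → V) (φ : Fin n → V) (hφM : ∀ j, φ j ∈ M)
    -- equal trace spans on the skeleton `Γ`
    (hspan : Submodule.span ℝ (Set.range (γ ∘ φ)) = Submodule.span ℝ (Set.range (γ ∘ ψ)))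
    (uh uhMS : V)
    (huh : uh ∈ Submodule.span ℝ (Set.range ψ))
    (huhMS : uhMS ∈ Submodule.span ℝ (Set.range φ))
    -- Galerkin conditions w.r.t. the energy inner product
    (hGal : ∀ v ∈ Submodule.span ℝ (Set.range ψ), ⟪uh, v⟫ = ⟪u, v⟫)
    (hGalMS : ∀ v ∈ Submodule.span ℝ (Set.range φ), ⟪uhMS, v⟫ = ⟪u, v⟫) :
    ‖u - uhMS‖ ^ 2 ≤ ‖u - uh‖ ^ 2 + C ^ 2 * H ^ 2 * Nf ^ 2 :=
  stmt_8_general γ M hmin C H Nf u u1 u2 hdecomp hu1 horth htrace hbub ψ φ hφM hspan uh uhMS huh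
    huhMS hGalMS
end

section
/- Let V, W be Hilbert spaces, P : V → W a compact operator, and V⁰ ⊆ V a closed subspace such that P vanishes on the orthogonal complement (V⁰)^⊥, i.e., P = P ∘ Π where Π is the orthogonal projection onto V⁰. Let Q : V → W be any bounded operator that agrees with P on V⁰. Then for every k, the k-th singular value satisfies σ_k(P) ≤ σ_k(Q). -/
/-!
Since `P` kills `V⁰ᗮ` and agrees with `Q` on `V⁰`, we have `P = Q ∘ Π` for the orthogonal
projection `Π`, a contraction, and precomposing with a contraction can only decrease singular
values: a `k`-dimensional `U` on which `Π` is injective is carried to the `k`-dimensional `Π U`,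
whose unit vectors `Π u` have `‖u‖ ≥ 1` and `‖Q (Π u)‖ = ‖P u‖ ≥ ‖P (u / ‖u‖)‖`; if `Π` is not
injective on `U`, then `P` vanishes on a unit vector of `U`.
-/

open RealInnerProductSpace

/-- The `k`-th singular value of an operator between Hilbert spaces, via the
max–min characterization: `σ_k(T) = sup_{dim V_k = k} inf_{u ∈ V_k, ‖u‖=1} ‖T u‖`. -/
noncomputable def singularValue {V W : Type*}
    [NormedAddCommGroup V] [InnerProductSpace ℝ V]
    [NormedAddCommGroup W] [InnerProductSpace ℝ W]
    (k : ℕ) (T : V →L[ℝ] W) : ℝ :=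
  ⨆ U : {U : Submodule ℝ V // Module.finrank ℝ U = k},
    ⨅ u : {u : V // u ∈ U.1 ∧ ‖u‖ = 1}, ‖T u.1‖

section SphereInf

variable {V V' W : Type*} [NormedAddCommGroup V] [NormedSpace ℝ V]
  [NormedAddCommGroup V'] [NormedSpace ℝ V'] [NormedAddCommGroup W] [NormedSpace ℝ W]

/-- `singularValue k T` is the supremum of `sphereInf T U` over `k`-dimensional `U`. -/
noncomputable def sphereInf (T : V →L[ℝ] W) (U : Submodule ℝ V) : ℝ :=
  ⨅ u : {u : V // u ∈ U ∧ ‖u‖ = 1}, ‖T u.1‖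

lemma sphereInf_nonneg (T : V →L[ℝ] W) (U : Submodule ℝ V) : 0 ≤ sphereInf T U :=
  Real.iInf_nonneg fun _ => norm_nonneg _

lemma sphereInf_le_opNorm (T : V →L[ℝ] W) (U : Submodule ℝ V) : sphereInf T U ≤ ‖T‖ := by
  rcases isEmpty_or_nonempty {u : V // u ∈ U ∧ ‖u‖ = 1} with hU | hU
  · rw [sphereInf, Real.iInf_of_isEmpty]
    exact norm_nonneg T
  · obtain ⟨u⟩ := hU
    calc sphereInf T U ≤ ‖T u.1‖ := ciInf_le ⟨0, Set.forall_mem_range.2 fun _ => norm_nonneg _⟩ u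
      _ ≤ ‖T‖ := T.le_of_opNorm_le_of_le le_rfl u.2.2.le |>.trans_eq (mul_one _)

lemma sphereInf_bot (T : V →L[ℝ] W) : sphereInf T ⊥ = 0 := by
  have : IsEmpty {u : V // u ∈ (⊥ : Submodule ℝ V) ∧ ‖u‖ = 1} :=
    ⟨fun ⟨u, hu, h1⟩ => by simp [(Submodule.mem_bot ℝ).1 hu] at h1⟩
  exact Real.iInf_of_isEmpty _

lemma nonempty_unit_mem_of_ne_bot {U : Submodule ℝ V} (hU : U ≠ ⊥) :
    Nonempty {u : V // u ∈ U ∧ ‖u‖ = 1} := by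
  obtain ⟨u, hu, hu0⟩ := U.exists_mem_ne_zero_of_ne_bot hU
  exact ⟨⟨‖u‖⁻¹ • u, U.smul_mem _ hu, norm_smul_inv_norm hu0⟩⟩

lemma sphereInf_le_div {T : V →L[ℝ] W} {U : Submodule ℝ V} {u : V} (hu : u ∈ U) (hu0 : u ≠ 0) :
    sphereInf T U ≤ ‖T u‖ / ‖u‖ := by
  calc sphereInf T U ≤ ‖T (‖u‖⁻¹ • u)‖ :=
        ciInf_le (f := fun v : {u : V // u ∈ U ∧ ‖u‖ = 1} => ‖T v.1‖)
          ⟨0, Set.forall_mem_range.2 fun _ => norm_nonneg _⟩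
          ⟨‖u‖⁻¹ • u, U.smul_mem _ hu, norm_smul_inv_norm hu0⟩
    _ = ‖T u‖ / ‖u‖ := by
        rw [map_smul, norm_smul, norm_inv, norm_norm, inv_mul_eq_div]

lemma sphereInf_comp_le_map (S : V' →L[ℝ] W) {f : V →L[ℝ] V'} (hf : ‖f‖ ≤ 1)
    {U : Submodule ℝ V} (hdisj : Disjoint U (LinearMap.ker (f : V →ₗ[ℝ] V'))) :
    sphereInf (S.comp f) U ≤ sphereInf S (U.map (f : V →ₗ[ℝ] V')) := by
  rcases eq_or_ne U ⊥ with rfl | hU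
  · exact (sphereInf_bot _).trans_le (sphereInf_nonneg _ _)
  have hfU : U.map (f : V →ₗ[ℝ] V') ≠ ⊥ := by
    obtain ⟨u, hu, hu0⟩ := U.exists_mem_ne_zero_of_ne_bot hU
    exact (Submodule.ne_bot_iff _).2
      ⟨f u, Submodule.mem_map_of_mem hu, fun h => hu0 (Submodule.disjoint_def.1 hdisj u hu h)⟩
  have := nonempty_unit_mem_of_ne_bot hfU
  refine le_ciInf ?_
  rintro ⟨_, ⟨u, hu, rfl⟩, h1⟩
  have hu0 : u ≠ 0 := by rintro rfl; simp at h1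
  have hu1 : 1 ≤ ‖u‖ := h1 ▸ (f.le_of_opNorm_le hf u).trans_eq (one_mul _)
  calc sphereInf (S.comp f) U ≤ ‖S (f u)‖ / ‖u‖ := sphereInf_le_div hu hu0
    _ ≤ ‖S (f u)‖ := div_le_self (norm_nonneg _) hu1

end SphereInf

section SingularValue

variable {V V' W : Type*} [NormedAddCommGroup V] [InnerProductSpace ℝ V]
  [NormedAddCommGroup V'] [InnerProductSpace ℝ V'] [NormedAddCommGroup W] [InnerProductSpace ℝ W]

lemma singularValue_nonneg (k : ℕ) (T : V →L[ℝ] W) : 0 ≤ singularValue k T :=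
  Real.iSup_nonneg fun U => sphereInf_nonneg T U.1

lemma sphereInf_le_singularValue (T : V →L[ℝ] W) {U : Submodule ℝ V} {k : ℕ}
    (hU : Module.finrank ℝ U = k) : sphereInf T U ≤ singularValue k T :=
  le_ciSup (f := fun U : {U : Submodule ℝ V // Module.finrank ℝ U = k} => sphereInf T U.1)
    ⟨‖T‖, Set.forall_mem_range.2 fun U => sphereInf_le_opNorm T U.1⟩ ⟨U, hU⟩

theorem singularValue_comp_le (k : ℕ) (S : V' →L[ℝ] W) {f : V →L[ℝ] V'} (hf : ‖f‖ ≤ 1) :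
    singularValue k (S.comp f) ≤ singularValue k S := by
  refine Real.iSup_le (fun ⟨U, hU⟩ => ?_) (singularValue_nonneg k S)
  by_cases hdisj : Disjoint U (LinearMap.ker (f : V →ₗ[ℝ] V'))
  · have hfU : Module.finrank ℝ (U.map (f : V →ₗ[ℝ] V')) = k := by
      rw [← LinearMap.range_domRestrict, LinearMap.finrank_range_of_inj
        (LinearMap.injective_domRestrict_iff.2 hdisj), hU]
    exact (sphereInf_comp_le_map S hf hdisj).trans (sphereInf_le_singularValue S hfU)
  · obtain ⟨u, hu, hfu, hu0⟩ : ∃ u ∈ U, f u = 0 ∧ u ≠ 0 := by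
      simpa [Submodule.disjoint_def] using hdisj
    calc sphereInf (S.comp f) U ≤ ‖S (f u)‖ / ‖u‖ := sphereInf_le_div hu hu0
      _ = 0 := by simp [hfu]
      _ ≤ singularValue k S := singularValue_nonneg k S

end SingularValue

lemma Submodule.eq_comp_starProjection {V W : Type*} [NormedAddCommGroup V]
    [InnerProductSpace ℝ V] [NormedAddCommGroup W] [NormedSpace ℝ W] {P Q : V →L[ℝ] W}
    (K : Submodule ℝ V) [K.HasOrthogonalProjection] (hP : ∀ v ∈ Kᗮ, P v = 0)
    (hPQ : ∀ v ∈ K, P v = Q v) : P = Q.comp K.starProjection := by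
  ext v
  have hv : P (v - K.starProjection v) = 0 := hP _ (K.sub_starProjection_mem_orthogonal v)
  rw [map_sub, sub_eq_zero] at hv
  rw [ContinuousLinearMap.comp_apply, ← hPQ _ (K.starProjection_apply_mem v), hv]

theorem stmt_9_general {V W : Type*}
    [NormedAddCommGroup V] [InnerProductSpace ℝ V] [CompleteSpace V]
    [NormedAddCommGroup W] [InnerProductSpace ℝ W]
    (P Q : V →L[ℝ] W)
    (V0 : Submodule ℝ V) (hV0 : IsClosed (V0 : Set V))
    (hPvanish : ∀ v ∈ V0ᗮ, P v = 0)
    (hagree : ∀ v ∈ V0, P v = Q v) :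
    ∀ k : ℕ, singularValue k P ≤ singularValue k Q := by
  have : CompleteSpace V0 := hV0.completeSpace_coe
  intro k
  rw [V0.eq_comp_starProjection hPvanish hagree]
  exact singularValue_comp_le k Q V0.starProjection_norm_le

/-- If the compact operator `P` vanishes on the orthogonal complement of a closed
subspace `V⁰` (i.e. `P = P ∘ Π` for the orthogonal projection `Π` onto `V⁰`), and the
bounded operator `Q` agrees with `P` on `V⁰`, then `σ_k(P) ≤ σ_k(Q)` for every `k`. -/
theorem stmt_9 {V W : Type*}
    [NormedAddCommGroup V] [InnerProductSpace ℝ V] [CompleteSpace V]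
    [NormedAddCommGroup W] [InnerProductSpace ℝ W] [CompleteSpace W]
    (P Q : V →L[ℝ] W) (hP : IsCompactOperator P)
    (V0 : Submodule ℝ V) (hV0 : IsClosed (V0 : Set V))
    (hPvanish : ∀ v ∈ V0ᗮ, P v = 0)
    (hagree : ∀ v ∈ V0, P v = Q v) :
    ∀ k : ℕ, singularValue k P ≤ singularValue k Q :=
  stmt_9_general P Q V0 hV0 hPvanish hagree
end
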